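/- arXiv:1402.5608 — 2 statements merged into one kernel-verified Lean document; each statement's English description precedes it below -/
import Mathlib

section
/- For all real x, y and λ > 0, the integral ∫_y^∞ φ(λ + (x−z)/(2λ)) e^{−z} z dz equals (2λx − 4λ³) e^{−x} (1 − Φ(λ + (y−x)/(2λ))) + 4λ² e^{−x} φ(λ + (y−x)/(2λ)). -/
open Real MeasureTheory Filter Set

/-- Standard normal density. -/
noncomputable def phi (t : ℝ) : ℝ := (Real.sqrt (2 * Real.pi))⁻¹ * Real.exp (-t ^ 2 / 2)

/-- Standard normal distribution function. -/
noncomputable def Phi (t : ℝ) : ℝ := ∫ s in Set.Iic t, phi s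

/-!
Completing the square, `φ(λ + (x - z)/(2λ)) e^{-z} = e^{-x} φ(c z)` with `c z = λ + (z - x)/(2λ)`.
Since `φ' t = -t φ t` and `z = 2λ (c z) + x - 2λ²`, the integrand `e^{-x} φ(c z) z` is the derivative
of `2λ e^{-x} ((x - 2λ²) Φ(c z) - 2λ φ(c z))`, which tends to `2λ e^{-x} (x - 2λ²)` at `+∞`
because `Φ → 1` and `φ → 0` there.
-/

open ProbabilityTheory Topology

lemma phi_eq_gaussianPDFReal : phi = gaussianPDFReal 0 1 := by
  ext t
  simp [phi, gaussianPDFReal]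

lemma integrable_phi : Integrable phi :=
  phi_eq_gaussianPDFReal ▸ integrable_gaussianPDFReal 0 1

lemma Phi_eq_cdf_gaussianReal : Phi = cdf (gaussianReal 0 1) := by
  ext t
  rw [cdf_eq_real, measureReal_def, gaussianReal_apply_eq_integral _ one_ne_zero,
    ENNReal.toReal_ofReal (setIntegral_nonneg measurableSet_Iic fun s _ ↦
      gaussianPDFReal_nonneg 0 1 s), Phi, phi_eq_gaussianPDFReal]

lemma tendsto_Phi_atTop : Tendsto Phi atTop (𝓝 1) :=
  Phi_eq_cdf_gaussianReal ▸ tendsto_cdf_atTop _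

lemma continuous_phi : Continuous phi := by
  unfold phi; fun_prop

lemma integrable_mul_phi : Integrable fun t ↦ t * phi t := by
  refine ((integrable_mul_exp_neg_mul_sq one_half_pos).const_mul
    (√(2 * π))⁻¹).congr (.of_forall fun t ↦ ?_)
  simp only [phi]; ring_nf

lemma hasDerivAt_phi (t : ℝ) : HasDerivAt phi (-t * phi t) t := by
  have hsq : HasDerivAt (fun s : ℝ ↦ -s ^ 2 / 2) (-t) t := by
    refine ((hasDerivAt_pow 2 t).neg.div_const 2).congr_deriv ?_
    simp only [Nat.cast_ofNat, Nat.add_one_sub_one, pow_one]; ring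
  refine (hsq.exp.const_mul (√(2 * π))⁻¹).congr_deriv ?_
  simp only [phi]; ring

lemma hasDerivAt_Phi (t : ℝ) : HasDerivAt Phi (phi t) t := by
  have hPhi : Phi = fun u ↦ Phi 0 + ∫ s in (0 : ℝ)..u, phi s := by
    ext u
    rw [← intervalIntegral.integral_Iic_sub_Iic integrable_phi.integrableOn
      integrable_phi.integrableOn, Phi, Phi]
    ring
  rw [hPhi]
  exact (intervalIntegral.integral_hasDerivAt_right integrable_phi.intervalIntegrable
    (continuous_phi.stronglyMeasurableAtFilter _ _) continuous_phi.continuousAt).const_add _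

lemma tendsto_phi_atTop : Tendsto phi atTop (𝓝 0) := by
  have h := (tendsto_exp_atBot.comp <| tendsto_neg_atTop_atBot.comp <|
    (tendsto_pow_atTop two_ne_zero).atTop_div_const two_pos).const_mul (√(2 * π))⁻¹
  rw [mul_zero] at h
  refine h.congr fun t ↦ ?_
  simp [phi, neg_div]

lemma integrable_phi_affine_mul_id (a : ℝ) {b : ℝ} (hb : b ≠ 0) :
    Integrable fun z ↦ phi (a + b * z) * z := by
  have hg : Integrable fun t ↦ b⁻¹ * (t * phi t) - a * b⁻¹ * phi t :=
    (integrable_mul_phi.const_mul _).sub (integrable_phi.const_mul _)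
  refine ((hg.comp_add_left a).comp_mul_left' hb).congr (.of_forall fun z ↦ ?_)
  field_simp
  ring

lemma phi_mul_exp_neg (l x z : ℝ) (hl : l ≠ 0) :
    phi (l + (x - z) / (2 * l)) * exp (-z) = exp (-x) * phi (l + (z - x) / (2 * l)) := by
  simp only [phi]
  rw [mul_assoc, ← exp_add, mul_left_comm, ← exp_add]
  congr 2
  field_simp
  ring

lemma integrable_phi_mul_exp_neg_mul_id (x : ℝ) {l : ℝ} (hl : l ≠ 0) :
    Integrable fun z ↦ phi (l + (x - z) / (2 * l)) * exp (-z) * z := by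
  have hb : (2 * l)⁻¹ ≠ 0 := by positivity
  refine ((integrable_phi_affine_mul_id (l - x / (2 * l)) hb).const_mul (exp (-x))).congr
    (.of_forall fun z ↦ ?_)
  dsimp only
  rw [phi_mul_exp_neg l x z hl]
  ring_nf

noncomputable def phiExpPrimitive (l x z : ℝ) : ℝ :=
  2 * l * exp (-x) *
    ((x - 2 * l ^ 2) * Phi (l + (z - x) / (2 * l)) - 2 * l * phi (l + (z - x) / (2 * l)))

lemma hasDerivAt_phiExpPrimitive (x z : ℝ) {l : ℝ} (hl : l ≠ 0) :
    HasDerivAt (phiExpPrimitive l x) (phi (l + (x - z) / (2 * l)) * exp (-z) * z) z := by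
  have hc : HasDerivAt (fun z ↦ l + (z - x) / (2 * l)) (1 / (2 * l)) z :=
    (((hasDerivAt_id z).sub_const x).div_const (2 * l)).const_add l
  have hPhi := (hasDerivAt_Phi _).comp z hc
  have hphi := (hasDerivAt_phi _).comp z hc
  refine (((hPhi.const_mul (x - 2 * l ^ 2)).sub (hphi.const_mul (2 * l))).const_mul
    (2 * l * exp (-x))).congr_deriv ?_
  rw [phi_mul_exp_neg l x z hl]
  field_simp
  ring

lemma tendsto_phiExpPrimitive_atTop (x : ℝ) {l : ℝ} (hl : 0 < l) :
    Tendsto (phiExpPrimitive l x) atTop (𝓝 (2 * l * exp (-x) * (x - 2 * l ^ 2))) := by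
  have hc : Tendsto (fun z ↦ l + (z - x) / (2 * l)) atTop atTop :=
    tendsto_atTop_add_const_left _ _ <|
      (tendsto_atTop_add_const_right _ _ tendsto_id).atTop_div_const (by positivity)
  have h := (((tendsto_Phi_atTop.comp hc).const_mul (x - 2 * l ^ 2)).sub
    ((tendsto_phi_atTop.comp hc).const_mul (2 * l))).const_mul (2 * l * exp (-x))
  rwa [mul_one, mul_zero, sub_zero] at h

theorem stmt1 (x y l : ℝ) (hl : 0 < l) :
    (∫ z in Set.Ioi y, phi (l + (x - z) / (2 * l)) * Real.exp (-z) * z)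
      = (2 * l * x - 4 * l ^ 3) * Real.exp (-x) * (1 - Phi (l + (y - x) / (2 * l)))
        + 4 * l ^ 2 * Real.exp (-x) * phi (l + (y - x) / (2 * l)) := by
  rw [integral_Ioi_of_hasDerivAt_of_tendsto' (fun z _ ↦ hasDerivAt_phiExpPrimitive x z hl.ne')
    (integrable_phi_mul_exp_neg_mul_id x hl.ne').integrableOn (tendsto_phiExpPrimitive_atTop x hl),
    phiExpPrimitive]
  ring
end

section
/- Let λ_n → λ ∈ (0,∞) with b_n²(λ − λ_n) → α and b_n²(b_n²(λ − λ_n) − α) → β, where b_n → ∞. Set A_{1n} = b_n²(λ − λ_n(1 − λ_n²/b_n²)^{−1/2}). Then b_n²(A_{1n} − α + λ³/2) → β + (3/2)αλ² − (3/8)λ⁵ as n → ∞. -/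
/-!
With `S = √(1 - L²/B²)` one has `1 - S = (L²/B²)/(1 + S)`, which gives the exact identity
`B²(λ - L/S) = B²(λ - L) - L³/(S(1 + S))`. Substituting it, and once more `1 - S² = L²/B²`,
writes `B²(B²(λ - L/S) - α + λ³/2)` as the sum of `B²(B²(λ - L) - α) → β`,
`B²(λ - L)(λ² + λL + L²)/2 → (3/2)αλ²` and `-L⁵(S + 2)/(2S(1 + S)²) → -(3/8)λ⁵`.
-/

open Filter Topology

section Identities

variable {B L S : ℝ}

lemma sq_mul_sub_div_eq_sub_cube_div (hB : B ≠ 0) (hS : 0 < S) (hS2 : S ^ 2 = 1 - L ^ 2 / B ^ 2)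
    (lam : ℝ) :
    B ^ 2 * (lam - L / S) = B ^ 2 * (lam - L) - L ^ 3 / (S * (1 + S)) := by
  have hL : L ^ 2 = B ^ 2 * (1 - S ^ 2) := by rw [hS2]; field_simp; ring
  field_simp
  linear_combination L * hL

lemma sq_mul_sub_div_eq_expansion_sum (hB : B ≠ 0) (hS : 0 < S) (hS2 : S ^ 2 = 1 - L ^ 2 / B ^ 2)
    (lam α : ℝ) :
    B ^ 2 * (B ^ 2 * (lam - L / S) - α + lam ^ 3 / 2)
      = B ^ 2 * (B ^ 2 * (lam - L) - α) + B ^ 2 * (lam - L) * (lam ^ 2 + lam * L + L ^ 2) / 2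
        - L ^ 5 * (S + 2) / (2 * S * (1 + S) ^ 2) := by
  have hL : L ^ 2 = B ^ 2 * (1 - S ^ 2) := by rw [hS2]; field_simp; ring
  rw [sq_mul_sub_div_eq_sub_cube_div hB hS hS2]
  field_simp
  linear_combination L ^ 3 * (S + 2) * hL

end Identities

lemma tendsto_sq_div_sq_of_tendsto_atTop {ι : Type*} {f : Filter ι} {l b : ι → ℝ} {lam : ℝ}
    (hl : Tendsto l f (𝓝 lam)) (hb : Tendsto b f atTop) :
    Tendsto (fun n => l n ^ 2 / b n ^ 2) f (𝓝 0) := by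
  simpa using (hl.pow 2).div_atTop ((tendsto_pow_atTop two_ne_zero).comp hb)

theorem stmt13_general (b l : ℕ → ℝ) (lam α β : ℝ)
    (hb : Filter.Tendsto b Filter.atTop Filter.atTop)
    (hl : Filter.Tendsto l Filter.atTop (nhds lam))
    (hα : Filter.Tendsto (fun n => (b n) ^ 2 * (lam - l n)) Filter.atTop (nhds α))
    (hβ : Filter.Tendsto (fun n => (b n) ^ 2 * ((b n) ^ 2 * (lam - l n) - α))
      Filter.atTop (nhds β)) :
    Filter.Tendsto
      (fun n => (b n) ^ 2 *
        ((b n) ^ 2 * (lam - l n / Real.sqrt (1 - (l n) ^ 2 / (b n) ^ 2)) - α + lam ^ 3 / 2))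
      Filter.atTop (nhds (β + 3 / 2 * α * lam ^ 2 - 3 / 8 * lam ^ 5)) := by
  set s := fun n => √(1 - l n ^ 2 / b n ^ 2)
  have hratio := tendsto_sq_div_sq_of_tendsto_atTop hl hb
  have hs : Tendsto s atTop (𝓝 1) := by
    simpa using ((tendsto_const_nhds (x := (1 : ℝ))).sub hratio).sqrt
  have hcubic : Tendsto (fun n => b n ^ 2 * (lam - l n) * (lam ^ 2 + lam * l n + l n ^ 2) / 2)
      atTop (𝓝 (α * (lam ^ 2 + lam * lam + lam ^ 2) / 2)) :=
    (hα.mul ((tendsto_const_nhds.add (tendsto_const_nhds.mul hl)).add (hl.pow 2))).div_const 2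
  have hrem : Tendsto (fun n => l n ^ 5 * (s n + 2) / (2 * s n * (1 + s n) ^ 2))
      atTop (𝓝 (lam ^ 5 * (1 + 2) / (2 * 1 * (1 + 1) ^ 2))) :=
    ((hl.pow 5).mul (hs.add_const 2)).div
      ((hs.const_mul 2).mul ((hs.const_add 1).pow 2)) (by norm_num)
  have hexpand : ∀ᶠ n in atTop, b n ^ 2 * (b n ^ 2 * (lam - l n) - α)
      + b n ^ 2 * (lam - l n) * (lam ^ 2 + lam * l n + l n ^ 2) / 2
      - l n ^ 5 * (s n + 2) / (2 * s n * (1 + s n) ^ 2)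
      = b n ^ 2 * (b n ^ 2 * (lam - l n / s n) - α + lam ^ 3 / 2) := by
    filter_upwards [hb.eventually_gt_atTop 0, hratio.eventually_lt_const one_pos] with n hbn hlb
    exact (sq_mul_sub_div_eq_expansion_sum hbn.ne' (Real.sqrt_pos.2 (sub_pos.2 hlb))
      (Real.sq_sqrt (sub_pos.2 hlb).le) lam α).symm
  convert ((hβ.add hcubic).sub hrem).congr' hexpand using 2
  ring

theorem stmt13 (b l : ℕ → ℝ) (lam α β : ℝ) (hlam : 0 < lam)
    (hlpos : ∀ n, 0 < l n)
    (hb : Filter.Tendsto b Filter.atTop Filter.atTop)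
    (hl : Filter.Tendsto l Filter.atTop (nhds lam))
    (hα : Filter.Tendsto (fun n => (b n) ^ 2 * (lam - l n)) Filter.atTop (nhds α))
    (hβ : Filter.Tendsto (fun n => (b n) ^ 2 * ((b n) ^ 2 * (lam - l n) - α))
      Filter.atTop (nhds β)) :
    Filter.Tendsto
      (fun n => (b n) ^ 2 *
        ((b n) ^ 2 * (lam - l n / Real.sqrt (1 - (l n) ^ 2 / (b n) ^ 2)) - α + lam ^ 3 / 2))
      Filter.atTop (nhds (β + 3 / 2 * α * lam ^ 2 - 3 / 8 * lam ^ 5)) :=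
  stmt13_general b l lam α β hb hl hα hβ
end
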